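/- arXiv:2303.07636 — 3 statements merged into one kernel-verified Lean document; each statement's English description precedes it below -/
import Mathlib

section
/- Let κ > 0 and τ > 0. For M > κ² + 2κ define r(M) = M(M + κ² + √((M-κ²)² - 4κ²))/(2κ²(M+1)) - 2 + τ. Then r is strictly increasing on (κ² + 2κ, ∞). -/
theorem r_strictMono (κ τ : ℝ) (hκ : 0 < κ) (hτ : 0 < τ) :
    StrictMonoOn
      (fun M : ℝ =>
        M * (M + κ^2 + Real.sqrt ((M - κ^2)^2 - 4*κ^2)) / (2*κ^2*(M + 1)) - 2 + τ)
      (Set.Ioi (κ^2 + 2*κ)) := by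
  have hκ2 : (0:ℝ) < κ^2 := by positivity
  have key : ∀ M : ℝ, κ^2 + 2*κ < M →
      0 < (M - κ^2 + Real.sqrt ((M - κ^2)^2 - 4*κ^2))/2 ∧
      M * (M + κ^2 + Real.sqrt ((M - κ^2)^2 - 4*κ^2)) / (2*κ^2*(M + 1))
        = (((M - κ^2 + Real.sqrt ((M - κ^2)^2 - 4*κ^2))/2)^2
            + κ^2*((M - κ^2 + Real.sqrt ((M - κ^2)^2 - 4*κ^2))/2) + κ^2)
          / (κ^2*(((M - κ^2 + Real.sqrt ((M - κ^2)^2 - 4*κ^2))/2)+1)) := by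
    intro M hM
    have hMκ : 2*κ < M - κ^2 := by linarith
    have hD : 0 ≤ (M - κ^2)^2 - 4*κ^2 := by nlinarith
    set s := Real.sqrt ((M - κ^2)^2 - 4*κ^2) with hs
    have hs0 : 0 ≤ s := Real.sqrt_nonneg _
    have hs2 : s^2 = (M - κ^2)^2 - 4*κ^2 := Real.sq_sqrt hD
    have hu : 0 < (M - κ^2 + s)/2 := by linarith
    refine ⟨hu, ?_⟩
    have h1 : (0:ℝ) < 2*κ^2*(M + 1) := by nlinarith
    have h2 : (0:ℝ) < κ^2*(((M - κ^2 + s)/2)+1) := by nlinarith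
    rw [div_eq_div_iff (ne_of_gt h1) (ne_of_gt h2)]
    linear_combination (-(κ^2)/2) * hs2
  intro a ha b hb hab
  simp only [Set.mem_Ioi] at ha hb
  obtain ⟨hA0, hAeq⟩ := key a ha
  obtain ⟨hB0, hBeq⟩ := key b hb
  set sa := Real.sqrt ((a - κ^2)^2 - 4*κ^2) with hsa
  set sb := Real.sqrt ((b - κ^2)^2 - 4*κ^2) with hsb
  have haκ : 2*κ < a - κ^2 := by linarith
  have hsab : sa ≤ sb := by
    apply Real.sqrt_le_sqrt
    nlinarith
  have hAB : (a - κ^2 + sa)/2 < (b - κ^2 + sb)/2 := by linarith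
  simp only
  rw [hAeq, hBeq]
  set A := (a - κ^2 + sa)/2
  set B := (b - κ^2 + sb)/2
  have hdA : (0:ℝ) < κ^2*(A+1) := by nlinarith
  have hdB : (0:ℝ) < κ^2*(B+1) := by nlinarith
  have : (A^2 + κ^2*A + κ^2) / (κ^2*(A+1)) < (B^2 + κ^2*B + κ^2) / (κ^2*(B+1)) := by
    rw [div_lt_div_iff₀ hdA hdB]
    have h4 : 0 < (B - A) * (A*B + A + B) :=
      mul_pos (by linarith) (by nlinarith [mul_pos hA0 hB0])
    nlinarith [mul_pos hκ2 h4]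
  linarith
end

section
/- Let d, κ > 0 and let α, β > 0 with α < β. Define H(u) = -u³/3 + ((α+β+1)/2)u² + (α+1)(β+1)(-u + log(u+1)). If β ≥ 3(α+1), then H(β) > 0. -/
theorem H_beta_positive (d κ α β : ℝ) (hd : 0 < d) (hκ : 0 < κ)
    (hα : 0 < α) (hβ : 0 < β) (hαβ : α < β) (hβα : 3*(α + 1) ≤ β) :
    0 < -β^3/3 + ((α + β + 1)/2) * β^2 + (α + 1)*(β + 1)*(-β + Real.log (β + 1)) := by
  have hb1 : (0:ℝ) < β + 1 := by linarith
  have hne : 1/(β+1) ≠ 1 := by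
    intro h
    have : β + 1 = 1 := by
      field_simp at h
      linarith
    linarith
  have hlog : Real.log (1/(β+1)) < 1/(β+1) - 1 :=
    Real.log_lt_sub_one_of_pos (by positivity) hne
  rw [one_div, Real.log_inv] at hlog
  -- hlog : -Real.log (β+1) < (β+1)⁻¹ - 1
  have hinv : (β+1) * (β+1)⁻¹ = 1 := mul_inv_cancel₀ (by linarith)
  have hlog2 : β < (β + 1) * Real.log (β + 1) := by nlinarith [hlog, hb1]
  nlinarith [hβα, hlog2, sq_nonneg β, mul_pos hα hβ, sq_nonneg (β*(β - 3*(α+1)))]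
end

section
/- Let d, κ > 0 and μ_c = κ² + 2√d κ. Define G(u;μ) as the antiderivative of g(u;μ) = u(u(μ-du)/(κ²(u+1)) - 1) with G(0;μ) = 0, and let β(μ) be the larger positive zero of g for μ > μ_c. Then the map μ ↦ G(β(μ);μ) is strictly increasing on (μ_c, ∞). -/
/-!
Write `G(u; μ) = μ · P(u) + Q(u)` with `P(u) = (u²/2 - u + log (u + 1)) / κ²`.
Since `β(μ)` is a critical point of `G(·; μ)`, the chain-rule term `∂ᵤG · β'` vanishes and
`d/dμ G(β(μ); μ) = P(β(μ))`, which is positive because `log (1 + u) > u - u²/2` for `u > 0`.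
-/

open Real

/-- The envelope theorem for a family that is affine in the parameter. -/
theorem HasDerivAt.affine_comp_of_isCritical {P Q β : ℝ → ℝ} {P' Q' μ : ℝ}
    (hP : HasDerivAt P P' (β μ)) (hQ : HasDerivAt Q Q' (β μ)) (hβ : DifferentiableAt ℝ β μ)
    (hcrit : μ * P' + Q' = 0) :
    HasDerivAt (fun m => m * P (β m) + Q (β m)) (P (β μ)) μ := by
  refine (((hasDerivAt_id' μ).fun_mul (hP.comp μ hβ.hasDerivAt)).fun_add
    (hQ.comp μ hβ.hasDerivAt)).congr_deriv ?_
  rw [Function.comp_apply]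
  linear_combination _root_.deriv β μ * hcrit

theorem hasDerivAt_sq_div_two_sub_add_log {u : ℝ} (hu : 0 < u + 1) :
    HasDerivAt (fun x => x ^ 2 / 2 - x + log (x + 1)) (u ^ 2 / (u + 1)) u := by
  refine ((((hasDerivAt_pow 2 u).div_const 2).fun_sub (hasDerivAt_id' u)).fun_add
    (((hasDerivAt_id' u).add_const 1).log hu.ne')).congr_deriv ?_
  field_simp
  ring

theorem hasDerivAt_neg_cube_div_three_add_sq_div_two_sub_add_log {u : ℝ} (hu : 0 < u + 1) :
    HasDerivAt (fun x => -x ^ 3 / 3 + x ^ 2 / 2 - x + log (x + 1)) (-u ^ 3 / (u + 1)) u := by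
  have := (((((hasDerivAt_pow 3 u).div_const 3).fun_neg.fun_add
    ((hasDerivAt_pow 2 u).div_const 2)).fun_sub (hasDerivAt_id' u)).fun_add
    (((hasDerivAt_id' u).add_const 1).log hu.ne'))
  simp only [← neg_div] at this
  refine this.congr_deriv ?_
  field_simp
  ring

theorem sq_div_two_sub_add_log_pos {u : ℝ} (hu : 0 < u) : 0 < u ^ 2 / 2 - u + log (u + 1) := by
  have hlog := lt_log_one_add_of_pos hu
  have hpade : u - u ^ 2 / 2 < 2 * u / (u + 2) := by
    rw [lt_div_iff₀ (by linarith)]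
    nlinarith [pow_pos hu 3]
  rw [add_comm 1 u] at hlog
  linarith

/-- The function `G(u; μ)` of the paper. -/
noncomputable def potential (d κ μ u : ℝ) : ℝ :=
  (μ / κ ^ 2) * (u ^ 2 / 2 - u + log (u + 1))
    + (d / κ ^ 2) * (-u ^ 3 / 3 + u ^ 2 / 2 - u + log (u + 1)) - u ^ 2 / 2

/-- The larger root `β(μ)` of `d u² - (μ - κ²) u + κ² = 0`, the equation `g(u; μ) = 0` for
`u ≠ 0`. -/
noncomputable def largerRoot (d κ μ : ℝ) : ℝ :=
  (μ - κ ^ 2 + √((μ - κ ^ 2) ^ 2 - 4 * d * κ ^ 2)) / (2 * d)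

section largerRoot

variable {d κ μ : ℝ}

theorem four_mul_mul_sq_lt_sq_sub (hd : 0 ≤ d) (hκ : 0 ≤ κ)
    (hμ : κ ^ 2 + 2 * √d * κ < μ) :
    4 * d * κ ^ 2 < (μ - κ ^ 2) ^ 2 := by
  calc 4 * d * κ ^ 2 = (2 * √d * κ) ^ 2 := by rw [mul_pow, mul_pow, sq_sqrt hd]; ring
    _ < (μ - κ ^ 2) ^ 2 := by gcongr; linarith

theorem largerRoot_pos (hd : 0 < d) (hμ : κ ^ 2 < μ) : 0 < largerRoot d κ μ := by
  unfold largerRoot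
  have := sqrt_nonneg ((μ - κ ^ 2) ^ 2 - 4 * d * κ ^ 2)
  apply div_pos <;> linarith

theorem largerRoot_isRoot (hd : d ≠ 0) (hdisc : 0 ≤ (μ - κ ^ 2) ^ 2 - 4 * d * κ ^ 2) :
    d * largerRoot d κ μ ^ 2 - (μ - κ ^ 2) * largerRoot d κ μ + κ ^ 2 = 0 := by
  unfold largerRoot
  have hs := sq_sqrt hdisc
  set s := √((μ - κ ^ 2) ^ 2 - 4 * d * κ ^ 2)
  field_simp
  linear_combination hs

theorem differentiableAt_largerRoot (hdisc : (μ - κ ^ 2) ^ 2 - 4 * d * κ ^ 2 ≠ 0) :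
    DifferentiableAt ℝ (largerRoot d κ) μ := by
  unfold largerRoot
  fun_prop (disch := exact hdisc)

theorem hasDerivAt_potential_largerRoot (hd : 0 < d) (hκ : 0 < κ)
    (hμ : κ ^ 2 + 2 * √d * κ < μ) :
    HasDerivAt (fun m => potential d κ m (largerRoot d κ m))
      ((largerRoot d κ μ ^ 2 / 2 - largerRoot d κ μ + log (largerRoot d κ μ + 1)) / κ ^ 2)
      μ := by
  have hdisc := four_mul_mul_sq_lt_sq_sub hd.le hκ.le hμ
  have hroot := largerRoot_isRoot (κ := κ) (μ := μ) hd.ne' (by linarith)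
  set β := largerRoot d κ μ
  have hβ : 0 < β + 1 := by
    linarith [largerRoot_pos hd (by nlinarith [sqrt_nonneg d] : κ ^ 2 < μ)]
  have hP := (hasDerivAt_sq_div_two_sub_add_log hβ).div_const (κ ^ 2)
  have hQ := ((hasDerivAt_neg_cube_div_three_add_sq_div_two_sub_add_log hβ).const_mul
    (d / κ ^ 2)).fun_sub ((hasDerivAt_pow 2 β).div_const 2)
  have hβdiff := differentiableAt_largerRoot (sub_pos.2 hdisc).ne'
  refine (HasDerivAt.affine_comp_of_isCritical (β := largerRoot d κ) hP hQ hβdiff ?_)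
    |>.congr_of_eventuallyEq (.of_forall fun m => ?_)
  · field_simp
    linear_combination (-2 * β) * hroot
  · unfold potential
    ring

end largerRoot

theorem G_beta_strictMono (d κ : ℝ) (hd : 0 < d) (hκ : 0 < κ) :
    StrictMonoOn
      (fun μ : ℝ =>
        let β := (μ - κ^2 + Real.sqrt ((μ - κ^2)^2 - 4*d*κ^2)) / (2*d)
        (μ/κ^2) * (β^2/2 - β + Real.log (β + 1))
          + (d/κ^2) * (-β^3/3 + β^2/2 - β + Real.log (β + 1)) - β^2/2)
      (Set.Ioi (κ^2 + 2*Real.sqrt d * κ)) := by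
  show StrictMonoOn (fun μ => potential d κ μ (largerRoot d κ μ)) _
  have hderiv μ (hμ : μ ∈ Set.Ioi (κ ^ 2 + 2 * √d * κ)) :=
    hasDerivAt_potential_largerRoot hd hκ hμ
  refine strictMonoOn_of_deriv_pos (convex_Ioi _)
    (fun μ hμ => (hderiv μ hμ).continuousAt.continuousWithinAt) fun μ hμ => ?_
  rw [interior_Ioi] at hμ
  have hβ : 0 < largerRoot d κ μ := largerRoot_pos hd (by nlinarith [hμ.out, sqrt_nonneg d])
  rw [(hderiv μ hμ).deriv]
  exact div_pos (sq_div_two_sub_add_log_pos hβ) (by positivity)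
end
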